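/- arXiv:1009.2975 — 2 statements merged into one kernel-verified Lean document; each statement's English description precedes it below -/
import Mathlib

section
/- On a 2-plectic manifold (M,ω), the set of Hamiltonian vector fields is a Lie subalgebra of the Lie algebra of vector fields on M: if v_α and v_β are Hamiltonian vector fields of Hamiltonian 1-forms α and β, then [v_α, v_β] is the Hamiltonian vector field of {α,β}, hence Hamiltonian. -/
noncomputable section

/-- An abstract Cartan calculus on a manifold: vector fields `X`, smooth functions `Ω0`,
differential forms `Ω1`–`Ω4`, points `Pt`, with exterior derivative, interior products,
evaluation at points, and the standard identities of the Cartan calculus. -/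
structure CartanCalculus (X Ω0 Ω1 Ω2 Ω3 Ω4 Pt : Type*)
    [LieRing X] [LieAlgebra ℝ X]
    [CommRing Ω0] [Algebra ℝ Ω0] [Module Ω0 X]
    [AddCommGroup Ω1] [Module ℝ Ω1] [Module Ω0 Ω1]
    [AddCommGroup Ω2] [Module ℝ Ω2]
    [AddCommGroup Ω3] [Module ℝ Ω3]
    [AddCommGroup Ω4] [Module ℝ Ω4] where
  /-- exterior derivative on functions -/
  d0 : Ω0 →ₗ[ℝ] Ω1
  d1 : Ω1 →ₗ[ℝ] Ω2
  d2 : Ω2 →ₗ[ℝ] Ω3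
  d3 : Ω3 →ₗ[ℝ] Ω4
  /-- interior product of a vector field with a 1-form -/
  i1 : X → Ω1 →ₗ[ℝ] Ω0
  i2 : X → Ω2 →ₗ[ℝ] Ω1
  i3 : X → Ω3 →ₗ[ℝ] Ω2
  i4 : X → Ω4 →ₗ[ℝ] Ω3
  /-- evaluation of a function at a point -/
  ev : Pt → Ω0 →ₗ[ℝ] ℝ
  d1_d0 : ∀ f, d1 (d0 f) = 0
  d2_d1 : ∀ α, d2 (d1 α) = 0
  d3_d2 : ∀ B, d3 (d2 B) = 0
  i_skew2 : ∀ v w B, i1 v (i2 w B) = - i1 w (i2 v B)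
  i_skew3 : ∀ v w σ, i2 v (i3 w σ) = - i2 w (i3 v σ)
  i_skew4 : ∀ v w σ, i3 v (i4 w σ) = - i3 w (i4 v σ)
  /-- `ι_{[v,w]} = L_v ι_w - ι_w L_v` on 1-forms, with `L` given by Cartan's formula -/
  ibr1 : ∀ v w α, i1 ⁅v, w⁆ α =
    i1 v (d0 (i1 w α)) - i1 w (i2 v (d1 α) + d0 (i1 v α))
  ibr2 : ∀ v w B, i2 ⁅v, w⁆ B =
    (i2 v (d1 (i2 w B)) + d0 (i1 v (i2 w B))) - i2 w (i3 v (d2 B) + d1 (i2 v B))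
  ibr3 : ∀ v w σ, i3 ⁅v, w⁆ σ =
    (i3 v (d2 (i3 w σ)) + d1 (i2 v (i3 w σ))) - i3 w (i4 v (d3 σ) + d2 (i3 v σ))
  /-- a 1-form vanishing on all vector fields is zero -/
  i1_ext : ∀ α : Ω1, (∀ v, i1 v α = 0) → α = 0
  i2_ext : ∀ B : Ω2, (∀ v, i2 v B = 0) → B = 0
  d0_mul : ∀ f g, d0 (f * g) = f • d0 g + g • d0 f
  i1_smul : ∀ (v : X) (f : Ω0) (α : Ω1), i1 v (f • α) = f * i1 v α
  i1_smulX : ∀ (f : Ω0) (v : X) (α : Ω1), i1 (f • v) α = f * i1 v α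
  i2_smulX : ∀ (f : Ω0) (v : X) (B : Ω2), i2 (f • v) B = f • i2 v B
  lie_smul' : ∀ (v : X) (f : Ω0) (w : X), ⁅v, f • w⁆ = f • ⁅v, w⁆ + (i1 v (d0 f)) • w
  d0_algebraMap : ∀ r : ℝ, d0 (algebraMap ℝ Ω0 r) = 0
  ev_algebraMap : ∀ (x : Pt) (r : ℝ), ev x (algebraMap ℝ Ω0 r) = r

namespace CartanCalculus

variable {X Ω0 Ω1 Ω2 Ω3 Ω4 Pt : Type*}
    [LieRing X] [LieAlgebra ℝ X]
    [CommRing Ω0] [Algebra ℝ Ω0] [Module Ω0 X]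
    [AddCommGroup Ω1] [Module ℝ Ω1] [Module Ω0 Ω1]
    [AddCommGroup Ω2] [Module ℝ Ω2]
    [AddCommGroup Ω3] [Module ℝ Ω3]
    [AddCommGroup Ω4] [Module ℝ Ω4]
    (C : CartanCalculus X Ω0 Ω1 Ω2 Ω3 Ω4 Pt)

/-- Lie derivative of a function: `L_v f = ι_v df`. -/
def lie0 (v : X) (f : Ω0) : Ω0 := C.i1 v (C.d0 f)

/-- Lie derivative of a 1-form via Cartan's formula: `L_v α = ι_v dα + d ι_v α`. -/
def lie1 (v : X) (α : Ω1) : Ω1 := C.i2 v (C.d1 α) + C.d0 (C.i1 v α)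

/-- `α` is a Hamiltonian 1-form with Hamiltonian vector field `v`: `dα = -ι_v ω`. -/
def IsHam (ω : Ω3) (α : Ω1) (v : X) : Prop := C.d1 α = - C.i3 v ω

/-- `v` is a Hamiltonian vector field. -/
def IsHamVF (ω : Ω3) (v : X) : Prop := ∃ α : Ω1, C.IsHam ω α v

/-- The bracket of Hamiltonian 1-forms, `{α, β} = ι_{v_β} ι_{v_α} ω`, expressed through
the Hamiltonian vector fields `v = v_α`, `w = v_β`. -/
def brkt (ω : Ω3) (v w : X) : Ω1 := C.i2 w (C.i3 v ω)

/-- `ι_u ι_v ι_w ω`. -/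
def triple (ω : Ω3) (u v w : X) : Ω0 := C.i1 u (C.i2 v (C.i3 w ω))

/-- The standard symmetric pairing on sections of `TM ⊕ T*M`. -/
def pairP (e1 e2 : X × Ω1) : Ω0 := C.i1 e1.1 e2.2 + C.i1 e2.1 e1.2

/-- The standard Courant bracket on sections of `TM ⊕ T*M`. -/
def cb (e1 e2 : X × Ω1) : X × Ω1 :=
  (⁅e1.1, e2.1⁆,
    C.lie1 e1.1 e2.2 - C.lie1 e2.1 e1.2
      - (1/2 : ℝ) • C.d0 (C.i1 e1.1 e2.2 - C.i1 e2.1 e1.2))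

/-- The standard Dorfman bracket on sections of `TM ⊕ T*M`. -/
def db (e1 e2 : X × Ω1) : X × Ω1 :=
  (⁅e1.1, e2.1⁆, C.lie1 e1.1 e2.2 - C.i2 e2.1 (C.d1 e1.2))

/-- The `ω`-twisted Courant bracket. -/
def tcb (ω : Ω3) (e1 e2 : X × Ω1) : X × Ω1 :=
  C.cb e1 e2 - ((0 : X), C.i2 e2.1 (C.i3 e1.1 ω))

/-- The `ω`-twisted Dorfman bracket. -/
def tdb (ω : Ω3) (e1 e2 : X × Ω1) : X × Ω1 :=
  C.db e1 e2 - ((0 : X), C.i2 e2.1 (C.i3 e1.1 ω))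

/-- The homotopy `Φ(α,β) = -½(ι_{v_α}β - ι_{v_β}α)`. -/
def Phi (v : X) (α : Ω1) (w : X) (β : Ω1) : Ω0 :=
  -((1/2 : ℝ) • (C.i1 v β - C.i1 w α))

/-- The Jacobiator of the Courant Lie 2-algebra. -/
def Jprime (ω : Ω3) (e1 e2 e3 : X × Ω1) : Ω0 :=
  -((1/6 : ℝ) • (C.pairP (C.tcb ω e1 e2) e3 + C.pairP (C.tcb ω e3 e1) e2
      + C.pairP (C.tcb ω e2 e3) e1))

/-- The degree-1 bracket `[e,f] = ½⟨e, df⟩₊` of the Courant Lie 2-algebra. -/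
def brD1 (e : X × Ω1) (f : Ω0) : Ω0 :=
  (1/2 : ℝ) • C.pairP e ((0 : X), C.d0 f)

/-- The Lie algebroid bracket on `TM ⊕ ℝ` twisted by a 2-form `ω₂` (via the splitting
`s(v) = (v,0)`): `[(v₁,f₁),(v₂,f₂)] = ([v₁,v₂], v₁(f₂) - v₂(f₁) - ω₂(v₁,v₂))`. -/
def abr (ω2 : Ω2) (e1 e2 : X × Ω0) : X × Ω0 :=
  (⁅e1.1, e2.1⁆,
    C.i1 e1.1 (C.d0 e2.2) - C.i1 e2.1 (C.d0 e1.2) - C.i1 e2.1 (C.i2 e1.1 ω2))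

end CartanCalculus

open CartanCalculus

variable {X Ω0 Ω1 Ω2 Ω3 Ω4 Pt : Type*}
    [LieRing X] [LieAlgebra ℝ X]
    [CommRing Ω0] [Algebra ℝ Ω0] [Module Ω0 X]
    [AddCommGroup Ω1] [Module ℝ Ω1] [Module Ω0 Ω1]
    [AddCommGroup Ω2] [Module ℝ Ω2]
    [AddCommGroup Ω3] [Module ℝ Ω3]
    [AddCommGroup Ω4] [Module ℝ Ω4]

namespace CartanCalculus

variable (C : CartanCalculus X Ω0 Ω1 Ω2 Ω3 Ω4 Pt) {ω : Ω3}

theorem d2_i3_eq_zero_of_isHam {α : Ω1} {v : X} (h : C.IsHam ω α v) : C.d2 (C.i3 v ω) = 0 := by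
  rw [show C.i3 v ω = -C.d1 α by rw [h, neg_neg], map_neg, C.d2_d1, neg_zero]

/-- In Cartan's formula `ι_{[v,w]} ω = L_v ι_w ω - ι_w L_v ω`, closedness of `ω`, `ι_v ω` and
`ι_w ω` kills every term except `d ι_v ι_w ω`. -/
theorem i3_lie_eq_d1 (hcl : C.d3 ω = 0) {v w : X}
    (hv : C.d2 (C.i3 v ω) = 0) (hw : C.d2 (C.i3 w ω) = 0) :
    C.i3 ⁅v, w⁆ ω = C.d1 (C.i2 v (C.i3 w ω)) := by
  rw [C.ibr3, hcl, hv, hw]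
  simp only [map_zero, add_zero, zero_add, sub_zero]

theorem brkt_eq_neg (v w : X) : C.brkt ω v w = -C.i2 v (C.i3 w ω) := by
  rw [brkt, C.i_skew3]

theorem isHam_brkt (hcl : C.d3 ω = 0) {α β : Ω1} {v w : X}
    (hα : C.IsHam ω α v) (hβ : C.IsHam ω β w) : C.IsHam ω (C.brkt ω v w) ⁅v, w⁆ := by
  rw [IsHam, brkt_eq_neg, map_neg,
    C.i3_lie_eq_d1 hcl (C.d2_i3_eq_zero_of_isHam hα) (C.d2_i3_eq_zero_of_isHam hβ)]

end CartanCalculus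

theorem hamVF_lie_subalgebra_general
    (C : CartanCalculus X Ω0 Ω1 Ω2 Ω3 Ω4 Pt) (ω : Ω3)
    (hcl : C.d3 ω = 0)
    (α β : Ω1) (vα vβ : X)
    (hα : C.IsHam ω α vα) (hβ : C.IsHam ω β vβ) :
    C.d1 (C.brkt ω vα vβ) = - C.i3 ⁅vα, vβ⁆ ω ∧ C.IsHamVF ω ⁅vα, vβ⁆ :=
  have h := C.isHam_brkt hcl hα hβ
  ⟨h, _, h⟩

/-- Hamiltonian vector fields form a Lie subalgebra: `[v_α, v_β]` is the Hamiltonian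
vector field of `{α,β}`, hence Hamiltonian. -/
theorem hamVF_lie_subalgebra
    (C : CartanCalculus X Ω0 Ω1 Ω2 Ω3 Ω4 Pt) (ω : Ω3)
    (hcl : C.d3 ω = 0) (hnd : ∀ v : X, C.i3 v ω = 0 → v = 0)
    (α β : Ω1) (vα vβ : X)
    (hα : C.IsHam ω α vα) (hβ : C.IsHam ω β vβ) :
    C.d1 (C.brkt ω vα vβ) = - C.i3 ⁅vα, vβ⁆ ω ∧ C.IsHamVF ω ⁅vα, vβ⁆ :=
  hamVF_lie_subalgebra_general C ω hcl α β vα vβ hα hβ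

end
end

section
/- Let (M,ω) be a 2-plectic manifold and C = TM ⊕ T*M the ω-twisted Courant algebroid with twisted Courant bracket ⟦·,·⟧. The maps φ₀(α) = v_α + α on Hamiltonian 1-forms, φ₁ = id on smooth functions, together with the homotopy Φ(α,β) = -½(ι_{v_α}β - ι_{v_β}α), define a morphism of Lie 2-algebras from L_∞(M,ω) to L_∞(C); in particular φ₀({α,β}) - ⟦φ₀(α),φ₀(β)⟧ = dΦ(α,β), and the coherence condition relating the two Jacobiators holds. -/
noncomputable section

open CartanCalculus

variable {X Ω0 Ω1 Ω2 Ω3 Ω4 Pt : Type*}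
    [LieRing X] [LieAlgebra ℝ X]
    [CommRing Ω0] [Algebra ℝ Ω0] [Module Ω0 X]
    [AddCommGroup Ω1] [Module ℝ Ω1] [Module Ω0 Ω1]
    [AddCommGroup Ω2] [Module ℝ Ω2]
    [AddCommGroup Ω3] [Module ℝ Ω3]
    [AddCommGroup Ω4] [Module ℝ Ω4]

/-! The Hamiltonian condition `dα = -ι_{v_α} ω` turns Lie derivatives of Hamiltonian forms into
contractions of `ω`: `L_v β = ι_{v_β} ι_v ω + d ι_v β`. Hence the twisted Courant bracket of
`v_α + α` and `v_β + β` is `[v_α, v_β] + {α, β} - dΦ(α, β)`. In the Courant Jacobiator each cyclic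
term then contributes `-2 ι_{v_α} ι_{v_β} ι_{v_γ} ω` plus derivatives of pairings, while on the
homotopy side the contractions of `ω` cancel (`Phi_lie_brkt_of_isHam`), leaving the same
derivative terms. -/

namespace CartanCalculus

variable (C : CartanCalculus X Ω0 Ω1 Ω2 Ω3 Ω4 Pt) {ω : Ω3}

theorem i1_zero_left (α : Ω1) : C.i1 (0 : X) α = 0 := by
  simpa using C.i1_smulX 0 0 α

theorem triple_swap_left (u v w : X) : C.triple ω v u w = -C.triple ω u v w :=
  C.i_skew2 v u _

theorem triple_swap_right (u v w : X) : C.triple ω u w v = -C.triple ω u v w := by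
  rw [triple, C.i_skew3, map_neg, triple]

theorem triple_cyclic (u v w : X) : C.triple ω v w u = C.triple ω u v w := by
  rw [C.triple_swap_left w v u, C.triple_swap_right w u v, neg_neg,
    C.triple_swap_left u w v, C.triple_swap_right u v w, neg_neg]

theorem brkt_swap (v w : X) : C.brkt ω w v = -C.brkt ω v w :=
  C.i_skew3 v w ω

theorem i1_brkt (u v w : X) : C.i1 u (C.brkt ω v w) = -C.triple ω v w u := by
  rw [C.triple_cyclic, ← C.triple_swap_right]
  rfl

theorem Phi_swap (v : X) (α : Ω1) (w : X) (β : Ω1) : C.Phi w β v α = -C.Phi v α w β := by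
  simp only [Phi]
  module

theorem brD1_eq (e : X × Ω1) (f : Ω0) : C.brD1 e f = (1/2 : ℝ) • C.lie0 e.1 f := by
  simp only [brD1, pairP, lie0, i1_zero_left, add_zero]

theorem Phi_zero_d0 (v : X) (α : Ω1) (f : Ω0) : C.Phi v α 0 (C.d0 f) = -C.brD1 (v, α) f := by
  simp only [Phi, brD1_eq, lie0, i1_zero_left, sub_zero]

theorem lie1_of_isHam {β : Ω1} {w : X} (hβ : C.IsHam ω β w) (v : X) :
    C.lie1 v β = C.brkt ω v w + C.d0 (C.i1 v β) := by
  rw [lie1, hβ, map_neg, C.i_skew3, neg_neg, brkt]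

theorem i1_lie_of_isHam {γ : Ω1} {w : X} (hγ : C.IsHam ω γ w) (u v : X) :
    C.i1 ⁅u, v⁆ γ = C.lie0 u (C.i1 v γ) - C.lie0 v (C.i1 u γ) - C.triple ω u v w := by
  rw [C.ibr1, hγ, map_neg, map_add, map_neg, ← triple, C.triple_swap_left, lie0, lie0]
  abel

theorem tcb_of_isHam {α β : Ω1} {v w : X} (hα : C.IsHam ω α v) (hβ : C.IsHam ω β w) :
    C.tcb ω (v, α) (w, β) = (⁅v, w⁆, C.brkt ω v w - C.d0 (C.Phi v α w β)) := by
  ext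
  · simp [tcb, cb]
  · simp only [tcb, cb, Prod.snd_sub, C.lie1_of_isHam hα, C.lie1_of_isHam hβ, C.brkt_swap v w,
      Phi, map_neg, map_smul, map_sub]
    simp only [brkt]
    module

theorem pairP_tcb_of_isHam {α β γ : Ω1} {u v w : X} (hα : C.IsHam ω α v) (hβ : C.IsHam ω β w)
    (hγ : C.IsHam ω γ u) :
    C.pairP (C.tcb ω (v, α) (w, β)) (u, γ) = C.lie0 v (C.i1 w γ) - C.lie0 w (C.i1 v γ)
      - C.lie0 u (C.Phi v α w β) - (2 : ℝ) • C.triple ω v w u := by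
  rw [pairP, C.tcb_of_isHam hα hβ, C.i1_lie_of_isHam hγ, map_sub, C.i1_brkt]
  simp only [lie0]
  module

theorem Phi_lie_brkt_of_isHam {γ : Ω1} {u : X} (hγ : C.IsHam ω γ u) (v w : X) :
    C.Phi u γ ⁅v, w⁆ (C.brkt ω v w)
      = (1/2 : ℝ) • (C.lie0 v (C.i1 w γ) - C.lie0 w (C.i1 v γ)) := by
  rw [Phi, C.i1_brkt, C.i1_lie_of_isHam hγ]
  module

theorem triple_sub_Jprime_of_isHam {α β γ : Ω1} {a b c : X} (hα : C.IsHam ω α a)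
    (hβ : C.IsHam ω β b) (hγ : C.IsHam ω γ c) :
    C.triple ω a b c - C.Jprime ω (a, α) (b, β) (c, γ)
      = C.Phi a α ⁅b, c⁆ (C.brkt ω b c)
        - C.Phi ⁅a, b⁆ (C.brkt ω a b) c γ
        - C.Phi b β ⁅a, c⁆ (C.brkt ω a c)
        + C.brD1 (c, γ) (C.Phi a α b β)
        + C.brD1 (a, α) (C.Phi b β c γ)
        - C.brD1 (b, β) (C.Phi a α c γ) := by
  rw [Jprime, C.pairP_tcb_of_isHam hα hβ hγ, C.pairP_tcb_of_isHam hγ hα hβ,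
    C.pairP_tcb_of_isHam hβ hγ hα, C.triple_cyclic a b c, ← C.triple_cyclic c a b,
    C.Phi_lie_brkt_of_isHam hα, C.Phi_swap c γ ⁅a, b⁆, C.Phi_lie_brkt_of_isHam hγ,
    C.Phi_lie_brkt_of_isHam hβ, brD1_eq, brD1_eq, brD1_eq]
  simp only [lie0, Phi, map_neg, map_smul, map_sub]
  module

end CartanCalculus

theorem morphism_to_courant_general
    (C : CartanCalculus X Ω0 Ω1 Ω2 Ω3 Ω4 Pt) (ω : Ω3) :
    (∀ (α β : Ω1) (vα vβ : X), C.IsHam ω α vα → C.IsHam ω β vβ →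
      ((⁅vα, vβ⁆, C.brkt ω vα vβ) : X × Ω1) - C.tcb ω (vα, α) (vβ, β)
        = ((0 : X), C.d0 (C.Phi vα α vβ β)))
    ∧
    (∀ (α : Ω1) (vα : X) (f : Ω0), C.IsHam ω α vα →
      (0 : Ω0) - C.brD1 (vα, α) f = C.Phi vα α (0 : X) (C.d0 f))
    ∧
    (∀ (α β γ : Ω1) (vα vβ vγ : X),
      C.IsHam ω α vα → C.IsHam ω β vβ → C.IsHam ω γ vγ →
      C.triple ω vα vβ vγ - C.Jprime ω (vα, α) (vβ, β) (vγ, γ)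
        = C.Phi vα α ⁅vβ, vγ⁆ (C.brkt ω vβ vγ)
          - C.Phi ⁅vα, vβ⁆ (C.brkt ω vα vβ) vγ γ
          - C.Phi vβ β ⁅vα, vγ⁆ (C.brkt ω vα vγ)
          + C.brD1 (vγ, γ) (C.Phi vα α vβ β)
          + C.brD1 (vα, α) (C.Phi vβ β vγ γ)
          - C.brD1 (vβ, β) (C.Phi vα α vγ γ)) := by
  refine ⟨fun α β vα vβ hα hβ => ?_, fun α vα f _ => ?_,
    fun α β γ vα vβ vγ hα hβ hγ => C.triple_sub_Jprime_of_isHam hα hβ hγ⟩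
  · rw [C.tcb_of_isHam hα hβ, Prod.mk_sub_mk, sub_self, sub_sub_cancel]
  · rw [zero_sub, C.Phi_zero_d0]

/-- The maps `φ₀(α) = v_α + α`, `φ₁ = id`, with homotopy `Φ(α,β) = -½(ι_{v_α}β - ι_{v_β}α)`,
form a Lie 2-algebra morphism from `L_∞(M,ω)` to `L_∞(C)`: the homotopy condition holds
in degrees 0 and 1, and the coherence condition relating the Jacobiators holds. -/
theorem morphism_to_courant
    (C : CartanCalculus X Ω0 Ω1 Ω2 Ω3 Ω4 Pt) (ω : Ω3)
    (hcl : C.d3 ω = 0) (hnd : ∀ v : X, C.i3 v ω = 0 → v = 0) :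
    (∀ (α β : Ω1) (vα vβ : X), C.IsHam ω α vα → C.IsHam ω β vβ →
      ((⁅vα, vβ⁆, C.brkt ω vα vβ) : X × Ω1) - C.tcb ω (vα, α) (vβ, β)
        = ((0 : X), C.d0 (C.Phi vα α vβ β)))
    ∧
    (∀ (α : Ω1) (vα : X) (f : Ω0), C.IsHam ω α vα →
      (0 : Ω0) - C.brD1 (vα, α) f = C.Phi vα α (0 : X) (C.d0 f))
    ∧
    (∀ (α β γ : Ω1) (vα vβ vγ : X),
      C.IsHam ω α vα → C.IsHam ω β vβ → C.IsHam ω γ vγ →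
      C.triple ω vα vβ vγ - C.Jprime ω (vα, α) (vβ, β) (vγ, γ)
        = C.Phi vα α ⁅vβ, vγ⁆ (C.brkt ω vβ vγ)
          - C.Phi ⁅vα, vβ⁆ (C.brkt ω vα vβ) vγ γ
          - C.Phi vβ β ⁅vα, vγ⁆ (C.brkt ω vα vγ)
          + C.brD1 (vγ, γ) (C.Phi vα α vβ β)
          + C.brD1 (vα, α) (C.Phi vβ β vγ γ)
          - C.brD1 (vβ, β) (C.Phi vα α vγ γ)) :=
  morphism_to_courant_general C ω

end
end
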